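/- Temporal message passing is strictly weaker than message passing on the collapsed static graph when T > 1: every R²-TGNN node classifier is computable by an R²-GNN on the collapsed graph (R²-TGNN ⊆ R²-GNN ∘ H), and the inclusion is strict, witnessed by the temporal graph with snapshots G_1 = {r(1,2), r(4,5)} and G_2 = {r(2,3)} on nodes {1,…,5}: the collapsed-graph classifier ∃y ( r^1(x,y) ∧ ∃x r^2(x,y) ) distinguishes nodes 1 and 4, but no R²-TGNN run forward in time can distinguish them. -/

import Mathlib

inductive Var : Type
  | x | y
deriving DecidableEq

structure MRGraph (P1 P2 : Type) where
  V : Type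
  [fintV : Fintype V]
  [decV : DecidableEq V]
  unary : P1 → V → Prop
  rel : P2 → V → V → Prop
  [decU : ∀ p, DecidablePred (unary p)]
  [decR : ∀ r, DecidableRel (rel r)]

attribute [instance] MRGraph.fintV MRGraph.decV MRGraph.decU MRGraph.decR

inductive FOC2 (P1 P2 : Type) : Type
  | tru : FOC2 P1 P2
  | atom : P1 → Var → FOC2 P1 P2
  | rel : P2 → Var → Var → FOC2 P1 P2
  | and : FOC2 P1 P2 → FOC2 P1 P2 → FOC2 P1 P2
  | or : FOC2 P1 P2 → FOC2 P1 P2 → FOC2 P1 P2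
  | not : FOC2 P1 P2 → FOC2 P1 P2
  | exge : ℕ → Var → FOC2 P1 P2 → FOC2 P1 P2

variable {P1 P2 : Type}

/-- Satisfaction of a `FOC2` formula in a multi-relational graph under an assignment. -/
def MRGraph.sat (G : MRGraph P1 P2) : (Var → G.V) → FOC2 P1 P2 → Prop
  | _, .tru => True
  | σ, .atom p v => G.unary p (σ v)
  | σ, .rel r u w => G.rel r (σ u) (σ w)
  | σ, .and φ ψ => G.sat σ φ ∧ G.sat σ ψ
  | σ, .or φ ψ => G.sat σ φ ∨ G.sat σ ψ
  | σ, .not φ => ¬ G.sat σ φ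
  | σ, .exge n v φ => ∃ S : Finset G.V, S.card = n ∧ ∀ a ∈ S, G.sat (Function.update σ v a) φ

/-- Quantifier depth. -/
def FOC2.depth : FOC2 P1 P2 → ℕ
  | .tru => 0
  | .atom _ _ => 0
  | .rel _ _ _ => 0
  | .and φ ψ => max φ.depth ψ.depth
  | .or φ ψ => max φ.depth ψ.depth
  | .not φ => φ.depth
  | .exge _ _ φ => φ.depth + 1

/-- All counting thresholds are at most `m`. -/
def FOC2.thresholdsLe (m : ℕ) : FOC2 P1 P2 → Prop
  | .tru => True
  | .atom _ _ => True
  | .rel _ _ _ => True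
  | .and φ ψ => φ.thresholdsLe m ∧ ψ.thresholdsLe m
  | .or φ ψ => φ.thresholdsLe m ∧ ψ.thresholdsLe m
  | .not φ => φ.thresholdsLe m
  | .exge n _ φ => n ≤ m ∧ φ.thresholdsLe m

/-- Free variables. -/
def FOC2.freeVars : FOC2 P1 P2 → Finset Var
  | .tru => ∅
  | .atom _ v => {v}
  | .rel _ u w => {u, w}
  | .and φ ψ => φ.freeVars ∪ ψ.freeVars
  | .or φ ψ => φ.freeVars ∪ ψ.freeVars
  | .not φ => φ.freeVars
  | .exge _ v φ => φ.freeVars \ {v}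

/-- Parse-tree size. -/
def FOC2.size : FOC2 P1 P2 → ℕ
  | .tru => 1
  | .atom _ _ => 1
  | .rel _ _ _ => 1
  | .and φ ψ => φ.size + ψ.size + 1
  | .or φ ψ => φ.size + ψ.size + 1
  | .not φ => φ.size + 1
  | .exge _ _ φ => φ.size + 1

/-- A generic R²-GNN run: per-layer combination functions taking the node's previous
feature, for each relation the multiset of neighbours' features, and the global multiset. -/
def runGNN (G : MRGraph P1 P2) {X : Type} (h0 : G.V → X)
    (C : ℕ → X → (P2 → Multiset X) → Multiset X → X) : ℕ → G.V → X
  | 0, v => h0 v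
  | i + 1, v =>
    C i (runGNN G h0 C i v)
      (fun r => (Finset.univ.filter (fun u => G.rel r v u)).val.map (runGNN G h0 C i))
      (Finset.univ.val.map (runGNN G h0 C i))

/-- A temporal knowledge graph with `T` snapshots over a common node set. -/
structure TGraph (P1 P2 : Type) (T : ℕ) where
  V : Type
  [fintV : Fintype V]
  [decV : DecidableEq V]
  unary : Fin T → P1 → V → Prop
  rel : Fin T → P2 → V → V → Prop
  [decU : ∀ t p, DecidablePred (unary t p)]
  [decR : ∀ t r, DecidableRel (rel t r)]

attribute [instance] TGraph.fintV TGraph.decV TGraph.decU TGraph.decR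

variable {T : ℕ}

/-- The snapshot at time `t`. -/
def TGraph.snap (G : TGraph P1 P2 T) (t : Fin T) : MRGraph P1 P2 where
  V := G.V
  unary := G.unary t
  rel := G.rel t
  decU := G.decU t
  decR := G.decR t

/-- The collapse `H`: the union over all timestamps of the temporalized snapshots, a
static graph over the timestamped predicates. -/
def TGraph.collapse (G : TGraph P1 P2 T) : MRGraph (P1 × Fin T) (P2 × Fin T) where
  V := G.V
  unary := fun p v => G.unary p.2 p.1 v
  rel := fun r a b => G.rel r.2 r.1 a b
  decU := fun p => G.decU p.2 p.1
  decR := fun r => G.decR r.2 r.1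

/-- A run of an R²-TGNN: at each timestamp `t`, the R²-GNN `C t` (with `Lt t` layers)
is run on snapshot `t`, initialized with the encoding of the one-hot unary information
at time `t` together with the previous timestamp's feature. -/
def runT (G : TGraph P1 P2 T) {X : Type} (xinit : X)
    (enc : (P1 → Bool) → X → X)
    (C : Fin T → ℕ → X → (P2 → Multiset X) → Multiset X → X)
    (Lt : Fin T → ℕ) : ℕ → G.V → X
  | 0, _ => xinit
  | t + 1, v =>
    if h : t < T then
      runGNN (G.snap ⟨t, h⟩)
        (fun u => enc (fun q => @decide (G.unary ⟨t, h⟩ q u) (G.decU ⟨t, h⟩ q u))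
          (runT G xinit enc C Lt t u))
        (C ⟨t, h⟩) (Lt ⟨t, h⟩) v
    else runT G xinit enc C Lt t v

/-- Two nodes are connected if some relation holds between them in some direction. -/
def connected (G : MRGraph P1 P2) [Fintype P2] (p : G.V × G.V) : Prop :=
  ∃ r : P2, G.rel r p.1 p.2 ∨ G.rel r p.2 p.1

instance (G : MRGraph P1 P2) [Fintype P2] (p : G.V × G.V) : Decidable (connected G p) := by
  unfold connected; infer_instance

/-- Unary predicates of the transformed graph: original unary predicates live on the
primal (original) nodes, and the fresh predicate `primal` marks them. -/
def transUnaryB (G : MRGraph P1 P2) [Fintype P2] :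
    (P1 ⊕ Unit) → (G.V ⊕ {p : G.V × G.V // connected G p}) → Bool
  | Sum.inl q, Sum.inl v => decide (G.unary q v)
  | Sum.inr _, Sum.inl _ => true
  | _, _ => false

/-- Relations of the transformed graph: original relations are moved onto the pairs
`(e_ab, e_ba)` of added nodes, `aux1` (encoded `true`) connects `a` with `e_ab`, and
`aux2` (encoded `false`) connects `e_ab` with `e_ba`. -/
def transRelB (G : MRGraph P1 P2) [Fintype P2] :
    (P2 ⊕ Bool) → (G.V ⊕ {p : G.V × G.V // connected G p}) →
      (G.V ⊕ {p : G.V × G.V // connected G p}) → Bool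
  | Sum.inl q, Sum.inr e, Sum.inr e' =>
      decide (e'.val = (e.val.2, e.val.1)) && decide (G.rel q e.val.1 e.val.2)
  | Sum.inr true, Sum.inl a, Sum.inr e => decide (e.val.1 = a)
  | Sum.inr true, Sum.inr e, Sum.inl a => decide (e.val.1 = a)
  | Sum.inr false, Sum.inr e, Sum.inr e' => decide (e'.val = (e.val.2, e.val.1))
  | _, _, _ => false

/-- The graph transformation `F` on static multi-relational graphs. -/
def transF (G : MRGraph P1 P2) [Fintype P2] : MRGraph (P1 ⊕ Unit) (P2 ⊕ Bool) where
  V := G.V ⊕ {p : G.V × G.V // connected G p}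
  unary := fun q v => transUnaryB G q v = true
  rel := fun r a b => transRelB G r a b = true
  decU := fun _ _ => instDecidableEqBool _ _
  decR := fun _ _ _ => instDecidableEqBool _ _

/-- Two nodes of a temporal graph are connected if some relation holds between them at
some timestamp. -/
def connectedT (G : TGraph P1 P2 T) [Fintype P2] (p : G.V × G.V) : Prop :=
  ∃ (t : Fin T) (r : P2), G.rel t r p.1 p.2 ∨ G.rel t r p.2 p.1

instance (G : TGraph P1 P2 T) [Fintype P2] (p : G.V × G.V) :
    Decidable (connectedT G p) := by
  unfold connectedT; infer_instance

/-- Per-snapshot unary predicates of the transformed temporal graph. -/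
def transTUnaryB (G : TGraph P1 P2 T) [Fintype P2] (t : Fin T) :
    (P1 ⊕ Unit) → (G.V ⊕ {p : G.V × G.V // connectedT G p}) → Bool
  | Sum.inl q, Sum.inl v => decide (G.unary t q v)
  | Sum.inr _, Sum.inl _ => true
  | _, _ => false

/-- Per-snapshot relations of the transformed temporal graph: original relations of
snapshot `t` are moved onto the added node pairs, while the `aux1`/`aux2` structural
edges are present at every timestamp. -/
def transTRelB (G : TGraph P1 P2 T) [Fintype P2] (t : Fin T) :
    (P2 ⊕ Bool) → (G.V ⊕ {p : G.V × G.V // connectedT G p}) →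
      (G.V ⊕ {p : G.V × G.V // connectedT G p}) → Bool
  | Sum.inl q, Sum.inr e, Sum.inr e' =>
      decide (e'.val = (e.val.2, e.val.1)) && decide (G.rel t q e.val.1 e.val.2)
  | Sum.inr true, Sum.inl a, Sum.inr e => decide (e.val.1 = a)
  | Sum.inr true, Sum.inr e, Sum.inl a => decide (e.val.1 = a)
  | Sum.inr false, Sum.inr e, Sum.inr e' => decide (e'.val = (e.val.2, e.val.1))
  | _, _, _ => false

/-- The per-snapshot graph transformation `F^T` of a temporal graph. -/
def transT (G : TGraph P1 P2 T) [Fintype P2] : TGraph (P1 ⊕ Unit) (P2 ⊕ Bool) T where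
  V := G.V ⊕ {p : G.V × G.V // connectedT G p}
  unary := fun t q v => transTUnaryB G t q v = true
  rel := fun t r a b => transTRelB G t r a b = true
  decU := fun _ _ _ => instDecidableEqBool _ _
  decR := fun _ _ _ _ => instDecidableEqBool _ _

/-- Symmetric edges of the witness temporal graph: at time `0`, `r(1,2)` and `r(4,5)`;
at time `1`, `r(2,3)` (0-indexed nodes). -/
def exEdges (t : Fin 2) : List (Fin 5 × Fin 5) :=
  if t.val = 0 then [(0, 1), (3, 4)] else [(1, 2)]

/-- The witness temporal graph on nodes `{1,…,5}` with snapshots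
`G₁ = {r(1,2), r(4,5)}` and `G₂ = {r(2,3)}`. -/
def Gex : TGraph Empty Unit 2 where
  V := Fin 5
  unary := fun _ q => q.elim
  rel := fun t _ a b => (a, b) ∈ exEdges t ∨ (b, a) ∈ exEdges t
  decU := fun _ q => q.elim
  decR := fun _ _ _ _ => by infer_instance

/-- The collapsed-graph classifier `∃y ( r¹(x,y) ∧ ∃x r²(x,y) )` over the timestamped
predicates `r¹ = ((),0)`, `r² = ((),1)`. -/
def phiEx : FOC2 (Empty × Fin 2) (Unit × Fin 2) :=
  FOC2.exge 1 Var.y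
    (FOC2.and (FOC2.rel ((), 0) Var.x Var.y)
      (FOC2.exge 1 Var.x (FOC2.rel ((), 1) Var.x Var.y)))

/-!
An R²-TGNN is simulated on the collapsed graph by running its snapshot GNNs one after another,
each restricted to the relations `r^t` of its own timestamp; the features carry the whole unary
bit vector of the collapsed graph, from which the encoder picks the bits of the current
timestamp.

GNN runs are invariant under automorphisms that preserve the initial features. Exchanging the
two edges of `G₁` is such an automorphism, so nodes `1` and `4` agree after timestamp `1`;
both are isolated in `G₂`, so swapping just them is again such an automorphism of `G₂`.
-/

abbrev Layers (P2 X : Type) : Type := ℕ → X → (P2 → Multiset X) → Multiset X → X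

section RunGNN

variable {P1 P2 X : Type} (G : MRGraph P1 P2) (h0 : G.V → X)

theorem runGNN_congr_of_lt {C C' : Layers P2 X} {n : ℕ} (h : ∀ i < n, C i = C' i) :
    runGNN G h0 C n = runGNN G h0 C' n := by
  induction n with
  | zero => rfl
  | succ n ih =>
    funext v
    simp only [runGNN, h n n.lt_succ_self, ih fun i hi => h i (by omega)]

theorem runGNN_add (C : Layers P2 X) (m n : ℕ) :
    runGNN G h0 C (m + n) = runGNN G (runGNN G h0 C m) (fun i => C (m + i)) n := by
  induction n with
  | zero => rfl
  | succ n ih =>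
    funext v
    rw [← Nat.add_assoc]
    simp only [runGNN, ih]

def appendLayers (m : ℕ) (C₁ C₂ : Layers P2 X) : Layers P2 X :=
  fun i => if i < m then C₁ i else C₂ (i - m)

theorem runGNN_appendLayers (C₁ C₂ : Layers P2 X) (m n : ℕ) :
    runGNN G h0 (appendLayers m C₁ C₂) (m + n) = runGNN G (runGNN G h0 C₁ m) C₂ n := by
  rw [runGNN_add,
    runGNN_congr_of_lt G h0 (C := appendLayers m C₁ C₂) (C' := C₁) fun i hi => if_pos hi]
  congr
  funext i
  simp [appendLayers]

theorem runGNN_apply_equiv (C : Layers P2 X) (π : G.V ≃ G.V)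
    (hrel : ∀ r a b, G.rel r (π a) (π b) ↔ G.rel r a b) (h0π : ∀ v, h0 (π v) = h0 v) :
    ∀ n v, runGNN G h0 C n (π v) = runGNN G h0 C n v := by
  intro n
  induction n with
  | zero => exact h0π
  | succ n ih =>
    intro v
    have hnbr : ∀ r, Finset.univ.filter (G.rel r (π v))
        = (Finset.univ.filter (G.rel r v)).map π.toEmbedding := by
      intro r
      rw [← Finset.map_univ_equiv π, Finset.filter_map]
      simp only [Function.comp_def, Equiv.coe_toEmbedding, hrel, Finset.map_univ_equiv]
    simp only [runGNN, hnbr, Finset.map_val, Multiset.map_map, Function.comp_def,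
      Equiv.coe_toEmbedding, ih]

end RunGNN

section RunT

variable {P1 P2 X : Type} {T : ℕ}

theorem runT_succ (G : TGraph P1 P2 T) (xinit : X) (enc : (P1 → Bool) → X → X)
    (C : Fin T → Layers P2 X) (Lt : Fin T → ℕ) {t : ℕ} (ht : t < T) :
    runT G xinit enc C Lt (t + 1) = runGNN (G.snap ⟨t, ht⟩)
      (fun u : G.V => enc (fun q => decide (G.unary ⟨t, ht⟩ q u)) (runT G xinit enc C Lt t u))
      (C ⟨t, ht⟩) (Lt ⟨t, ht⟩) := by
  funext v
  rw [runT, dif_pos ht]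
  rfl

theorem runT_succ_apply_equiv (G : TGraph P1 P2 T) (xinit : X)
    (enc : (P1 → Bool) → X → X) (C : Fin T → Layers P2 X) (Lt : Fin T → ℕ) {t : ℕ}
    (ht : t < T) (π : G.V ≃ G.V)
    (hrel : ∀ r a b, G.rel ⟨t, ht⟩ r (π a) (π b) ↔ G.rel ⟨t, ht⟩ r a b)
    (hunary : ∀ q a, G.unary ⟨t, ht⟩ q (π a) ↔ G.unary ⟨t, ht⟩ q a)
    (hprev : ∀ v, runT G xinit enc C Lt t (π v) = runT G xinit enc C Lt t v) (v : G.V) :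
    runT G xinit enc C Lt (t + 1) (π v) = runT G xinit enc C Lt (t + 1) v := by
  rw [runT_succ G xinit enc C Lt ht]
  refine runGNN_apply_equiv (G.snap ⟨t, ht⟩) _ _ π hrel (fun u => ?_) _ v
  change enc _ (runT G xinit enc C Lt t (π u)) = enc _ (runT G xinit enc C Lt t u)
  rw [hprev u]
  congr 1
  funext q
  exact decide_eq_decide.mpr (hunary q u)

end RunT

section Collapse

variable {P1 P2 X B : Type} {T : ℕ}

def liftLayers (t : Fin T) (C : Layers P2 X) : Layers (P2 × Fin T) (B × X) :=
  fun i p nbr glob => (p.1, C i p.2 (fun r => (nbr (r, t)).map Prod.snd) (glob.map Prod.snd))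

theorem runGNN_collapse_liftLayers (G : TGraph P1 P2 T) (t : Fin T) (C : Layers P2 X)
    (h0 : G.V → B × X) (n : ℕ) (v : G.V) :
    runGNN G.collapse h0 (liftLayers t C) n v
      = ((h0 v).1, runGNN (G.snap t) (fun u => (h0 u).2) C n v) := by
  induction n generalizing v with
  | zero => rfl
  | succ n ih =>
    have ih' : (fun u => (runGNN G.collapse h0 (liftLayers t C) n u).2)
        = runGNN (G.snap t) (fun u => (h0 u).2) C n := funext fun u => congrArg Prod.snd (ih u)
    simp only [runGNN, liftLayers, Multiset.map_map, Function.comp_def, ih', ih v]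
    rfl

def encLayer (t : Fin T) (enc : (P1 → Bool) → X → X) :
    Layers (P2 × Fin T) (((P1 × Fin T) → Bool) × X) :=
  fun _ p _ _ => (p.1, enc (fun q => p.1 (q, t)) p.2)

def collapsedDepth (Lt : Fin T → ℕ) : ℕ → ℕ
  | 0 => 0
  | k + 1 => if h : k < T then collapsedDepth Lt k + (1 + Lt ⟨k, h⟩) else collapsedDepth Lt k

def collapsedLayers (enc : (P1 → Bool) → X → X) (C : Fin T → Layers P2 X)
    (Lt : Fin T → ℕ) : ℕ → Layers (P2 × Fin T) (((P1 × Fin T) → Bool) × X)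
  | 0 => fun _ p _ _ => p
  | k + 1 =>
    if h : k < T then
      appendLayers (collapsedDepth Lt k) (collapsedLayers enc C Lt k)
        (appendLayers 1 (encLayer ⟨k, h⟩ enc) (liftLayers ⟨k, h⟩ (C ⟨k, h⟩)))
    else collapsedLayers enc C Lt k

theorem runGNN_collapsedLayers (G : TGraph P1 P2 T) (xinit : X) (enc : (P1 → Bool) → X → X)
    (C : Fin T → Layers P2 X) (Lt : Fin T → ℕ) (k : ℕ) :
    runGNN G.collapse (fun u => (fun q => decide (G.collapse.unary q u), xinit))
        (collapsedLayers enc C Lt k) (collapsedDepth Lt k)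
      = fun v => (fun q => decide (G.collapse.unary q v), runT G xinit enc C Lt k v) := by
  induction k with
  | zero => rfl
  | succ k ih =>
    by_cases hk : k < T
    · simp only [collapsedDepth, collapsedLayers, dif_pos hk]
      rw [runGNN_appendLayers, ih, runGNN_appendLayers, runT_succ G xinit enc C Lt hk]
      funext v
      exact runGNN_collapse_liftLayers G _ _ _ _ v
    · have hrun : runT G xinit enc C Lt (k + 1) = runT G xinit enc C Lt k := by
        funext v
        rw [runT, dif_neg hk]
      simp only [collapsedDepth, collapsedLayers, dif_neg hk, hrun, ih]

end Collapse

instance MRGraph.decidableSat {P1 P2 : Type} (G : MRGraph P1 P2) :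
    (φ : FOC2 P1 P2) → (σ : Var → G.V) → Decidable (G.sat σ φ)
  | .tru, _ => .isTrue trivial
  | .atom p v, σ => G.decU p (σ v)
  | .rel r u w, σ => G.decR r (σ u) (σ w)
  | .and φ ψ, σ => @instDecidableAnd _ _ (decidableSat G φ σ) (decidableSat G ψ σ)
  | .or φ ψ, σ => @instDecidableOr _ _ (decidableSat G φ σ) (decidableSat G ψ σ)
  | .not φ, σ => @instDecidableNot _ (decidableSat G φ σ)
  | .exge n v φ, σ =>
    haveI : DecidablePred fun a => G.sat (Function.update σ v a) φ :=
      fun _ => decidableSat G φ _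
    inferInstanceAs
      (Decidable (∃ S : Finset G.V, S.card = n ∧ ∀ a ∈ S, G.sat (Function.update σ v a) φ))

section Witness

variable {X : Type} (xinit : X) (enc : (Empty → Bool) → X → X) (C : Fin 2 → Layers Unit X)
  (Lt : Fin 2 → ℕ)

theorem runT_Gex_one_swap_mul_swap (v : Fin 5) :
    runT Gex xinit enc C Lt 1 ((Equiv.swap 0 3 * Equiv.swap 1 4 : Equiv.Perm (Fin 5)) v)
      = runT Gex xinit enc C Lt 1 v :=
  runT_succ_apply_equiv Gex xinit enc C Lt zero_lt_two _ (by decide) (fun q => q.elim)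
    (fun _ => rfl) v

theorem runT_Gex_two_zero_eq_three :
    runT Gex xinit enc C Lt 2 (0 : Fin 5) = runT Gex xinit enc C Lt 2 (3 : Fin 5) := by
  have hswap : ∀ v : Fin 5,
      runT Gex xinit enc C Lt 1 ((Equiv.swap 0 3 : Equiv.Perm (Fin 5)) v)
        = runT Gex xinit enc C Lt 1 v := by
    intro v
    fin_cases v
    · exact (runT_Gex_one_swap_mul_swap xinit enc C Lt 3).symm
    · rfl
    · rfl
    · exact runT_Gex_one_swap_mul_swap xinit enc C Lt 3
    · rfl
  exact runT_succ_apply_equiv Gex xinit enc C Lt one_lt_two (Equiv.swap 0 3 : Equiv.Perm (Fin 5))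
    (by decide) (fun q => q.elim) hswap (3 : Fin 5)

end Witness

/-- Every R²-TGNN node classifier is computable by an R²-GNN on the collapsed graph
(`R²-TGNN ⊆ R²-GNN ∘ H`), and the inclusion is strict: on the witness temporal graph
the collapsed-graph `FOC2` classifier distinguishes nodes `1` and `4` (0-indexed `0`
and `3`), but no R²-TGNN run forward in time can distinguish them. -/
theorem stmt18 :
    (∀ {P1 P2 : Type} [Fintype P1] [Fintype P2] (T : ℕ)
        (c : (G : TGraph P1 P2 T) → G.V → Prop),
      (∃ (X : Type) (xinit : X) (enc : (P1 → Bool) → X → X)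
          (C : Fin T → ℕ → X → (P2 → Multiset X) → Multiset X → X)
          (Lt : Fin T → ℕ) (out : X → Prop),
          ∀ (G : TGraph P1 P2 T) (v : G.V),
            c G v ↔ out (runT G xinit enc C Lt T v)) →
      (∃ (X : Type) (ι : ((P1 × Fin T) → Bool) → X)
          (C : ℕ → X → ((P2 × Fin T) → Multiset X) → Multiset X → X)
          (L : ℕ) (out : X → Prop),
          ∀ (G : TGraph P1 P2 T) (v : G.V),
            c G v ↔ out (runGNN G.collapse
              (fun u => ι (fun q => decide (G.collapse.unary q u))) C L v))) ∧
    (Gex.collapse.sat (fun _ => (0 : Fin 5)) phiEx ∧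
     ¬ Gex.collapse.sat (fun _ => (3 : Fin 5)) phiEx ∧
     ∀ (X : Type) (xinit : X) (enc : (Empty → Bool) → X → X)
       (C : Fin 2 → ℕ → X → (Unit → Multiset X) → Multiset X → X) (Lt : Fin 2 → ℕ),
       runT Gex xinit enc C Lt 2 (0 : Fin 5) = runT Gex xinit enc C Lt 2 (3 : Fin 5)) := by
  -- Instance search cannot see that `Gex.collapse.V` is `Fin 5`, so the instance is passed.
  refine ⟨?_, of_decide_eq_true (inst := MRGraph.decidableSat _ _ _) rfl,
    of_decide_eq_false (inst := MRGraph.decidableSat _ _ _) rfl,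
    fun _ => runT_Gex_two_zero_eq_three⟩
  rintro P1 P2 - - T c ⟨X, xinit, enc, C, Lt, out, hc⟩
  refine ⟨((P1 × Fin T) → Bool) × X, (·, xinit), collapsedLayers enc C Lt T,
    collapsedDepth Lt T, out ∘ Prod.snd, fun G v => ?_⟩
  rw [hc, runGNN_collapsedLayers]
  rfl
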